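/- Let h(φ) := log 2 − 1 + cos φ − (φ/2)·sin(2φ) − cos(2φ)·log(2 cos(φ/2)). Then h(φ) > 0 for all real φ with 0 < φ ≤ 1/3. -/

import Mathlib

/-!
Each transcendental term of `h` is replaced by a one-sided Taylor polynomial (the quartic and
quintic ones obtained from Mathlib's `x - x³/6 ≤ sin x` by integrating twice), `log c ≤ c - 1`
handles the logarithm, and `log 2 > 0.6931471803`. Near `0`, `h(φ) ≈ (2 log 2 - 11/8) φ²`,
and on `(0, 1/3]` this leading term still dominates the resulting polynomial error terms.
-/

open Real

lemma le_of_hasDerivAt_le_of_nonneg {f g f' g' : ℝ → ℝ} (hf : ∀ t, HasDerivAt f (f' t) t)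
    (hg : ∀ t, HasDerivAt g (g' t) t) (h₀ : f 0 ≤ g 0) (h' : ∀ t, 0 < t → f' t ≤ g' t)
    {x : ℝ} (hx : 0 ≤ x) : f x ≤ g x := by
  have hmono : MonotoneOn (g - f) (Set.Ici 0) := by
    refine monotoneOn_of_hasDerivWithinAt_nonneg (f' := g' - f') (convex_Ici 0)
      (fun t _ => ((hg t).sub (hf t)).continuousAt.continuousWithinAt)
      (fun t _ => ((hg t).sub (hf t)).hasDerivWithinAt) fun t ht => ?_
    rw [interior_Ici] at ht
    exact sub_nonneg.2 (h' t ht)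
  have := hmono Set.self_mem_Ici hx hx
  simp only [Pi.sub_apply] at this
  linarith

lemma cos_le_quartic_taylor (x : ℝ) : cos x ≤ 1 - x ^ 2 / 2 + x ^ 4 / 24 := by
  have key (y : ℝ) (hy : 0 ≤ y) : cos y ≤ 1 - y ^ 2 / 2 + y ^ 4 / 24 :=
    le_of_hasDerivAt_le_of_nonneg (g := fun t => 1 - t ^ 2 / 2 + t ^ 4 / 24)
      (g' := fun t => -t + t ^ 3 / 6) hasDerivAt_cos
      (fun t => ((((hasDerivAt_pow 2 t).div_const 2).const_sub 1).add
        ((hasDerivAt_pow 4 t).div_const 24)).congr_deriv (by push_cast; ring))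
      (by simp) (fun t ht => by nlinarith [sin_ge_sub_cube ht.le]) hy
  have := key |x| (abs_nonneg x)
  rwa [cos_abs, Even.pow_abs (by decide), Even.pow_abs (by decide)] at this

lemma sin_le_quintic_taylor {x : ℝ} (hx : 0 ≤ x) : sin x ≤ x - x ^ 3 / 6 + x ^ 5 / 120 :=
  le_of_hasDerivAt_le_of_nonneg (g := fun t => t - t ^ 3 / 6 + t ^ 5 / 120)
    (g' := fun t => 1 - t ^ 2 / 2 + t ^ 4 / 24) hasDerivAt_sin
    (fun t => (((hasDerivAt_id' t).sub ((hasDerivAt_pow 3 t).div_const 6)).add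
      ((hasDerivAt_pow 5 t).div_const 120)).congr_deriv (by push_cast; ring))
    (by simp) (fun t _ => by nlinarith [cos_le_quartic_taylor t]) hx

/-- `h` with its trigonometric factors replaced by their Taylor bounds and `log 2` by `l`: it is
`x²` times a cubic in `x²` whose constant term `2 l - 11/8` is barely positive. -/
lemma taylor_minorant_pos (x l : ℝ) (hx : 0 < x) (hx' : x ≤ 1 / 3) (hl : 0.6931471803 < l) :
    0 < l - 1 + (1 - x ^ 2 / 2) - x / 2 * (2 * x - (2 * x) ^ 3 / 6 + (2 * x) ^ 5 / 120)
      - (1 - (2 * x) ^ 2 / 2 + (2 * x) ^ 4 / 24)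
        * (l + (1 - (x / 2) ^ 2 / 2 + (x / 2) ^ 4 / 24 - 1)) := by
  set y := x ^ 2 with hy_def
  have hy : 0 < y := by positivity
  have hy' : y ≤ 1 / 9 := by nlinarith
  have hcubic :
      0 < (2 * l - 11 / 8) + (159 / 384 - 2 * l / 3) * y - 43 / 960 * y ^ 2 - y ^ 3 / 576 := by
    nlinarith [mul_nonneg (sub_nonneg.2 hl.le) (sub_nonneg.2 hy'),
      mul_nonneg hy.le (sub_nonneg.2 hy'), mul_nonneg (mul_nonneg hy.le hy.le) (sub_nonneg.2 hy')]
  have hfactor : l - 1 + (1 - x ^ 2 / 2) - x / 2 * (2 * x - (2 * x) ^ 3 / 6 + (2 * x) ^ 5 / 120)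
      - (1 - (2 * x) ^ 2 / 2 + (2 * x) ^ 4 / 24)
        * (l + (1 - (x / 2) ^ 2 / 2 + (x / 2) ^ 4 / 24 - 1)) =
      y * ((2 * l - 11 / 8) + (159 / 384 - 2 * l / 3) * y - 43 / 960 * y ^ 2 - y ^ 3 / 576) := by
    rw [hy_def]; ring
  rw [hfactor]; positivity

lemma log_two_mul_le {c : ℝ} (hc : 0 < c) : log (2 * c) ≤ log 2 + (c - 1) := by
  rw [log_mul two_ne_zero hc.ne']
  gcongr
  exact log_le_sub_one_of_pos hc

theorem stmt_3 (φ : ℝ) (h1 : 0 < φ) (h2 : φ ≤ 1 / 3) :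
    0 < Real.log 2 - 1 + Real.cos φ - (φ / 2) * Real.sin (2 * φ)
      - Real.cos (2 * φ) * Real.log (2 * Real.cos (φ / 2)) := by
  have hcos_half : 1 / 2 ≤ cos (φ / 2) := by
    nlinarith [one_sub_sq_div_two_le_cos (x := φ / 2)]
  have hlog : log (2 * cos (φ / 2)) ≤ log 2 + (1 - (φ / 2) ^ 2 / 2 + (φ / 2) ^ 4 / 24 - 1) :=
    (log_two_mul_le (by linarith)).trans (by gcongr; exact cos_le_quartic_taylor _)
  calc 0 < _ := taylor_minorant_pos φ (log 2) h1 h2 log_two_gt_d9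
    _ ≤ _ := by
      gcongr
      · exact one_sub_sq_div_two_le_cos
      · exact sin_le_quintic_taylor (by positivity)
      · exact log_nonneg (by linarith)
      · nlinarith
      · exact cos_le_quartic_taylor _
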